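/- In any BDRG A, the following are equivalent: (1) a ∧ (a → b) ≤ b holds for all a, b ∈ A (modus ponens axiom (MP)); (2) a ≤ a • a holds for all a ∈ A (the contraction rule (ct)). -/

import Mathlib

/-- A bounded distributive lattice-ordered residuated groupoid (BDRG):
a bounded distributive lattice with operations `prod` (•), `imp` (→), `limp` (←)
satisfying the residuation law: a • b ≤ c ↔ b ≤ a → c ↔ a ≤ c ← b. -/
structure BDRG (A : Type*) [DistribLattice A] [BoundedOrder A] where
  prod : A → A → A
  imp : A → A → A
  limp : A → A → A
  res_imp : ∀ a b c : A, prod a b ≤ c ↔ b ≤ imp a c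
  res_limp : ∀ a b c : A, prod a b ≤ c ↔ a ≤ limp c b

/-! (MP) ⇒ (ct): instantiate (MP) at `b := a • a`, using the unit `a ≤ a → a • a` of residuation.
(ct) ⇒ (MP): for `x := a ∧ (a → b)` we get `x ≤ x • x ≤ a • (a → b) ≤ b`, since `•` is
monotone in both arguments (residuation) and `a • (a → b) ≤ b` is the counit. -/

namespace BDRG

variable {A : Type*} [DistribLattice A] [BoundedOrder A] (G : BDRG A)

theorem le_imp_prod (a b : A) : b ≤ G.imp a (G.prod a b) :=
  (G.res_imp a b _).mp le_rfl

theorem prod_imp_le (a b : A) : G.prod a (G.imp a b) ≤ b :=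
  (G.res_imp a _ b).mpr le_rfl

theorem prod_mono_right {a b b' : A} (h : b ≤ b') : G.prod a b ≤ G.prod a b' :=
  (G.res_imp a b _).mpr (h.trans (G.le_imp_prod a b'))

theorem prod_mono_left {a a' b : A} (h : a ≤ a') : G.prod a b ≤ G.prod a' b :=
  (G.res_limp a b _).mpr (h.trans ((G.res_limp a' b _).mp le_rfl))

theorem prod_mono {a a' b b' : A} (ha : a ≤ a') (hb : b ≤ b') :
    G.prod a b ≤ G.prod a' b' :=
  (G.prod_mono_left ha).trans (G.prod_mono_right hb)

end BDRG

theorem corr_MP_ct {A : Type*} [DistribLattice A] [BoundedOrder A] (G : BDRG A) :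
    (∀ a b : A, a ⊓ G.imp a b ≤ b) ↔ (∀ a : A, a ≤ G.prod a a) := by
  constructor
  · intro mp a
    exact le_inf le_rfl (G.le_imp_prod a a) |>.trans (mp a (G.prod a a))
  · intro ct a b
    calc a ⊓ G.imp a b ≤ G.prod (a ⊓ G.imp a b) (a ⊓ G.imp a b) := ct _
      _ ≤ G.prod a (G.imp a b) := G.prod_mono inf_le_left inf_le_right
      _ ≤ b := G.prod_imp_le a b
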